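/- arXiv:2306.06481 — 4 statements merged into one kernel-verified Lean document; each statement's English description precedes it below -/
import Mathlib

section
/- Let N ∈ ℂ^{d×d} be upper Hessenberg and let z ∈ ℂ be such that zI − N is invertible. Then e_d^T (zI − N)^{-1} e₁ = (∏_{j=1}^{d−1} N_{j+1,j}) / det(zI − N). -/
open Matrix

/-!
Expanding the inverse as `det⁻¹ • adjugate`, the entry `(d, 1)` of the adjugate of `A = zI - N`
is, up to the sign `(-1)^d`, the minor of `A` obtained by deleting row `1` and column `d`.
For a Hessenberg matrix this minor is upper triangular, with diagonal the subdiagonal of `A`,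
which is `-N_{j+1,j}`; the two signs cancel.
-/

namespace Matrix

variable {R : Type*} [CommRing R]

def IsUpperHessenberg {n : ℕ} (A : Matrix (Fin n) (Fin n) R) : Prop :=
  ∀ i j : Fin n, (j : ℕ) + 1 < (i : ℕ) → A i j = 0

theorem IsUpperHessenberg.smul_one_sub {n : ℕ} {A : Matrix (Fin n) (Fin n) R}
    (hA : A.IsUpperHessenberg) (z : R) :
    (z • (1 : Matrix (Fin n) (Fin n) R) - A).IsUpperHessenberg := by
  intro i j hij
  rw [sub_apply, hA i j hij, smul_apply, one_apply_ne (by omega : i ≠ j), smul_zero, sub_zero]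

theorem IsUpperHessenberg.det_submatrix_succ_castSucc {d : ℕ}
    {A : Matrix (Fin (d + 1)) (Fin (d + 1)) R} (hA : A.IsUpperHessenberg) :
    (A.submatrix Fin.succ Fin.castSucc).det = ∏ j : Fin d, A j.succ j.castSucc := by
  refine det_of_isUpperTriangular fun i j (hji : j < i) => hA _ _ ?_
  simpa using hji

theorem IsUpperHessenberg.adjugate_last_zero {d : ℕ}
    {A : Matrix (Fin (d + 1)) (Fin (d + 1)) R} (hA : A.IsUpperHessenberg) :
    A.adjugate (Fin.last d) 0 = (-1) ^ d * ∏ j : Fin d, A j.succ j.castSucc := by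
  rw [adjugate_fin_succ_eq_det_submatrix, Fin.succAbove_zero, Fin.succAbove_last,
    hA.det_submatrix_succ_castSucc, Fin.val_zero, Fin.val_last, zero_add]

theorem IsUpperHessenberg.inv_last_zero {K : Type*} [Field K] {d : ℕ}
    {A : Matrix (Fin (d + 1)) (Fin (d + 1)) K} (hA : A.IsUpperHessenberg) :
    A⁻¹ (Fin.last d) 0 = (-1) ^ d * (∏ j : Fin d, A j.succ j.castSucc) / A.det := by
  rw [inv_def, smul_apply, hA.adjugate_last_zero, Ring.inverse_eq_inv, smul_eq_mul,
    div_eq_inv_mul]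

end Matrix

theorem hessenberg_resolvent_corner_entry_general
    {d : ℕ}
    (N : Matrix (Fin (d + 1)) (Fin (d + 1)) ℂ)
    (hHess : ∀ i j : Fin (d + 1), (j : ℕ) + 1 < (i : ℕ) → N i j = 0)
    (z : ℂ) :
    (z • (1 : Matrix (Fin (d + 1)) (Fin (d + 1)) ℂ) - N)⁻¹ (Fin.last d) 0 =
      (∏ j : Fin d, N j.succ j.castSucc) /
        (z • (1 : Matrix (Fin (d + 1)) (Fin (d + 1)) ℂ) - N).det := by
  have hA : (z • (1 : Matrix (Fin (d + 1)) (Fin (d + 1)) ℂ) - N).IsUpperHessenberg :=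
    IsUpperHessenberg.smul_one_sub hHess z
  have hsub (j : Fin d) :
      (z • (1 : Matrix (Fin (d + 1)) (Fin (d + 1)) ℂ) - N) j.succ j.castSucc =
        -1 * N j.succ j.castSucc := by
    rw [Matrix.sub_apply, Matrix.smul_apply, one_apply_ne Fin.castSucc_lt_succ.ne', smul_zero,
      zero_sub, neg_one_mul]
  rw [hA.inv_last_zero, Finset.prod_congr rfl fun j _ => hsub j, Finset.prod_mul_distrib,
    Finset.prod_const, Finset.card_univ, Fintype.card_fin, ← mul_assoc, ← mul_pow,
    neg_one_mul, neg_neg, one_pow, one_mul]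

/-- For an upper Hessenberg matrix `N` and `z` such that `zI - N` is invertible,
the bottom-left entry of the resolvent satisfies
`e_dᵀ (zI - N)⁻¹ e₁ = (∏_j N_{j+1,j}) / det(zI - N)`.
(The paper's `d` is written as `d+1`.) -/
theorem hessenberg_resolvent_corner_entry
    {d : ℕ}
    (N : Matrix (Fin (d + 1)) (Fin (d + 1)) ℂ)
    (hHess : ∀ i j : Fin (d + 1), (j : ℕ) + 1 < (i : ℕ) → N i j = 0)
    (z : ℂ)
    (hz : (z • (1 : Matrix (Fin (d + 1)) (Fin (d + 1)) ℂ) - N).det ≠ 0) :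
    (z • (1 : Matrix (Fin (d + 1)) (Fin (d + 1)) ℂ) - N)⁻¹ (Fin.last d) 0 =
      (∏ j : Fin d, N j.succ j.castSucc) /
        (z • (1 : Matrix (Fin (d + 1)) (Fin (d + 1)) ℂ) - N).det :=
  hessenberg_resolvent_corner_entry_general N hHess z
end

section
/- Let A ∈ ℝ^{n×n} and b ∈ ℝⁿ, b ≠ 0. Suppose: (i) 𝒰_d ∈ ℝ^{n×d} has orthonormal columns and ℋ_d := 𝒰_d^T A 𝒰_d; (ii) U_d ∈ ℝ^{n×d}, u_{d+1} ∈ ℝⁿ, H_d ∈ ℝ^{d×d}, h_{d+1,d} ∈ ℝ satisfy A U_d = U_d H_d + h_{d+1,d} u_{d+1} e_d^T; (iii) U_d = 𝒰_d 𝒯_d with 𝒯_d upper triangular and invertible, 𝒯_d e₁ = e₁, and τ̂_d the (d,d) entry of 𝒯_d. Let r ∈ ℝ^d and set r̂ := (𝒯_d r − h_{d+1,d} 𝒰_d^T u_{d+1}) / τ̂_d. Assume ℋ_d + r̂ e_d^T (viewed over ℂ) is diagonalizable: ℋ_d + r̂ e_d^T = X Λ X^{-1}, Λ = diag(λ₁,…,λ_d),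 and set α_i = e_d^T X e_i, β_i = e_i^T X^{-1} e₁. Then for every polynomial p ∈ ℂ[X], the sketched FOM approximation f_d^sk := U_d p(H_d + r e_d^T) e₁ ‖b‖ and the full FOM approximation f_d^fom := 𝒰_d p(ℋ_d) e₁ ‖b‖ satisfy f_d^sk − f_d^fom = 𝒰_d (Σ_{i=1}^d α_i β_i · p[ℋ_d, λ_i]) r̂ · ‖b‖. -/
/-! Projecting the Arnoldi relation with `𝒰ᵀ` and using that the last row of the upper triangular
`𝒯` is `τ̂ e_dᵀ` gives `(ℋ + r̂ e_dᵀ) 𝒯 = 𝒯 (H + r e_dᵀ)`; with `U = 𝒰 𝒯` and `𝒯 e₁ = e₁` the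
sketched approximation becomes `𝒰 p(ℋ + r̂ e_dᵀ) e₁ ‖b‖`.

For an eigenvector `x` of `ℋ + r̂ e_dᵀ` with eigenvalue `λ` we have `(ℋ - λ) x = -(e_dᵀ x) r̂`, so
`p(ℋ) = p(λ) + p[ℋ, λ] (ℋ - λ)` gives `p(ℋ) x = p(λ) x - (e_dᵀ x) p[ℋ, λ] r̂`, while
`p(ℋ + r̂ e_dᵀ) x = p(λ) x`. Expanding `e₁ = ∑ β_i X e_i` in the eigenbasis yields the formula.
-/

open Matrix

/-- Euclidean norm of a vector in `ℝ^m`. -/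
noncomputable def eunorm {m : ℕ} (v : Fin m → ℝ) : ℝ := Real.sqrt (∑ i, (v i) ^ 2)

/-- The first-order divided-difference polynomial `p[·, λ] = (p - p(λ)) / (X - λ)`
(exact division in `ℂ[X]`). -/
noncomputable def divDiffPoly (p : Polynomial ℂ) (lam : ℂ) : Polynomial ℂ :=
  (p - Polynomial.C (p.eval lam)) / (Polynomial.X - Polynomial.C lam)

open Polynomial

lemma mul_divDiffPoly (p : ℂ[X]) (lam : ℂ) :
    (X - C lam) * divDiffPoly p lam = p - C (p.eval lam) :=
  mul_div_eq_iff_isRoot.mpr (by simp)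

lemma Complex.ofReal_comp_single {ι : Type*} [DecidableEq ι] (i : ι) (x : ℝ) :
    (fun j => ((Pi.single i x : ι → ℝ) j : ℂ)) = Pi.single i (x : ℂ) :=
  funext (Pi.apply_single (fun _ => Complex.ofReal) (fun _ => Complex.ofReal_zero) i x)

lemma Matrix.map_vecMulVec {R S F : Type*} [Mul R] [Mul S] [FunLike F R S] [MulHomClass F R S]
    {l o : Type*} (f : F) (v : l → R) (w : o → R) :
    (vecMulVec v w).map f = vecMulVec (fun i => f (v i)) (fun j => f (w j)) := by
  ext i j
  simp [vecMulVec_apply]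

lemma Polynomial.aeval_mul_eq_mul_aeval {R A : Type*} [CommSemiring R] [Semiring A] [Algebra R A]
    {G T M : A} (h : G * T = T * M) (p : R[X]) : aeval G p * T = T * aeval M p := by
  induction p using Polynomial.induction_on with
  | C a => simp [Algebra.commutes]
  | add p q hp hq => simp [add_mul, mul_add, hp, hq]
  | monomial n a ih =>
    rw [pow_succ, ← mul_assoc]
    calc aeval G (C a * X ^ n * X) * T = aeval G (C a * X ^ n) * (G * T) := by simp [mul_assoc]
      _ = T * aeval M (C a * X ^ n * X) := by rw [h, ← mul_assoc, ih, mul_assoc]; simp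

namespace Matrix

section CommRing

variable {R : Type*} [CommRing R] {m n : Type*} [Fintype m]

lemma single_vecMul_of_isUpperTriangular [DecidableEq m] [LinearOrder m] {T : Matrix m m R}
    (hT : T.IsUpperTriangular) {i : m} (hi : IsTop i) :
    Pi.single i 1 ᵥ* T = T i i • Pi.single i 1 := by
  ext j
  rcases eq_or_ne j i with rfl | hj
  · simp
  · simp [Pi.single_eq_of_ne hj, hT (lt_of_le_of_ne (hi j) hj)]

lemma transpose_mul_mul_mul_eq_of_mul_mul_eq [Fintype n] [DecidableEq m] {A : Matrix n n R}
    {V : Matrix n m R} (hV : Vᵀ * V = 1) {T H : Matrix m m R} {u : n → R} {c : m → R} {h : R}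
    (hrel : A * (V * T) = V * T * H + h • vecMulVec u c) :
    Vᵀ * A * V * T = T * H + h • vecMulVec (Vᵀ *ᵥ u) c := by
  have := congrArg (Vᵀ * ·) hrel
  simpa [Matrix.mul_add, ← Matrix.mul_assoc, hV, mul_vecMulVec] using this

lemma add_vecMulVec_mul_eq_mul_add_vecMulVec {K T H : Matrix m m R} {w r r' c : m → R} {h τ : R}
    (hK : K * T = T * H + h • vecMulVec w c) (hc : c ᵥ* T = τ • c)
    (hr' : τ • r' = T *ᵥ r - h • w) :
    (K + vecMulVec r' c) * T = T * (H + vecMulVec r c) := by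
  rw [Matrix.add_mul, Matrix.mul_add, hK, vecMulVec_mul, hc, vecMulVec_smul, ← smul_vecMulVec τ,
    hr', sub_vecMulVec, ← mul_vecMulVec, smul_vecMulVec]
  abel

lemma mul_mulVec_aeval_mulVec [DecidableEq m] {V : Matrix n m R} {T G M : Matrix m m R}
    (hGT : G * T = T * M) {w : m → R} (hw : T *ᵥ w = w) (p : R[X]) :
    (V * T) *ᵥ (aeval M p *ᵥ w) = V *ᵥ (aeval G p *ᵥ w) := by
  rw [← mulVec_mulVec, mulVec_mulVec _ T, ← aeval_mul_eq_mul_aeval hGT, ← mulVec_mulVec, hw]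

end CommRing

variable {m : Type*} [Fintype m] [DecidableEq m]

lemma aeval_mulVec_eq_eval_smul_add (K : Matrix m m ℂ) (x : m → ℂ) (lam : ℂ) (p : ℂ[X]) :
    aeval K p *ᵥ x = p.eval lam • x + aeval K (divDiffPoly p lam) *ᵥ (K *ᵥ x - lam • x) := by
  conv_lhs => rw [← sub_add_cancel p (C (p.eval lam)), ← mul_divDiffPoly, mul_comm]
  simp [add_mulVec, ← mulVec_mulVec, sub_mulVec, Algebra.algebraMap_eq_smul_one, smul_mulVec,
    add_comm]

lemma aeval_mulVec_of_mulVec_eq_smul {K : Matrix m m ℂ} {x : m → ℂ} {lam : ℂ}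
    (hx : K *ᵥ x = lam • x) (p : ℂ[X]) : aeval K p *ᵥ x = p.eval lam • x := by
  simpa [hx] using aeval_mulVec_eq_eval_smul_add K x lam p

lemma aeval_mulVec_of_add_vecMulVec_mulVec_eq_smul {K : Matrix m m ℂ} {v c x : m → ℂ} {lam : ℂ}
    (hx : (K + vecMulVec v c) *ᵥ x = lam • x) (p : ℂ[X]) :
    aeval K p *ᵥ x = p.eval lam • x - (c ⬝ᵥ x) • aeval K (divDiffPoly p lam) *ᵥ v := by
  have hK : K *ᵥ x - lam • x = -((c ⬝ᵥ x) • v) := by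
    rw [← hx, add_mulVec, vecMulVec_mulVec, op_smul_eq_smul]
    abel
  rw [aeval_mulVec_eq_eval_smul_add K x lam p, hK, mulVec_neg, mulVec_smul, sub_eq_add_neg]

theorem aeval_add_vecMulVec_mulVec_sub_aeval_mulVec (K : Matrix m m ℂ) (v c w : m → ℂ)
    {P : Matrix m m ℂ} {Λ : m → ℂ} (hP : IsUnit P.det)
    (hdiag : K + vecMulVec v c = P * diagonal Λ * P⁻¹) (p : ℂ[X]) :
    aeval (K + vecMulVec v c) p *ᵥ w - aeval K p *ᵥ w
      = (∑ i, ((c ⬝ᵥ P.col i) * (P⁻¹ *ᵥ w) i) • aeval K (divDiffPoly p (Λ i))) *ᵥ v := by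
  have heig : ∀ i, (K + vecMulVec v c) *ᵥ P.col i = Λ i • P.col i := by
    intro i
    rw [← mulVec_single_one, mulVec_mulVec, hdiag, Matrix.mul_assoc, Matrix.mul_assoc,
      nonsing_inv_mul _ hP, Matrix.mul_one, ← mulVec_mulVec, mulVec_single_one]
    ext j
    simp [mul_comm]
  have hw : w = ∑ i, (P⁻¹ *ᵥ w) i • P.col i := by
    conv_lhs => rw [← one_mulVec w, ← mul_nonsing_inv _ hP, ← mulVec_mulVec, mulVec_eq_sum]
    simp only [op_smul_eq_smul]
    rfl
  set β := P⁻¹ *ᵥ w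
  calc aeval (K + vecMulVec v c) p *ᵥ w - aeval K p *ᵥ w
      = ∑ i, β i • (aeval (K + vecMulVec v c) p *ᵥ P.col i - aeval K p *ᵥ P.col i) := by
        conv_lhs => rw [hw]
        simp [mulVec_sum, mulVec_smul, smul_sub]
    _ = ∑ i, β i • ((c ⬝ᵥ P.col i) • aeval K (divDiffPoly p (Λ i)) *ᵥ v) := by
        simp_rw [aeval_mulVec_of_mulVec_eq_smul (heig _),
          aeval_mulVec_of_add_vecMulVec_mulVec_eq_smul (heig _), sub_sub_cancel]
    _ = _ := by simp [sum_mulVec, smul_mulVec, smul_smul, mul_comm]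

end Matrix

-- The paper's `d` is `d + 1` here.
theorem sketched_minus_full_fom_general
    {n d : ℕ}
    (A : Matrix (Fin n) (Fin n) ℝ) (b : Fin n → ℝ)
    (cU : Matrix (Fin n) (Fin (d + 1)) ℝ) (hcU : cUᵀ * cU = 1)
    (U : Matrix (Fin n) (Fin (d + 1)) ℝ) (u : Fin n → ℝ)
    (H : Matrix (Fin (d + 1)) (Fin (d + 1)) ℝ) (h : ℝ)
    (hrel : A * U = U * H + h • vecMulVec u (Pi.single (Fin.last d) 1 : Fin (d + 1) → ℝ))
    (cT : Matrix (Fin (d + 1)) (Fin (d + 1)) ℝ)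
    (hcTupper : ∀ i j : Fin (d + 1), j < i → cT i j = 0)
    (hcTdet : cT.det ≠ 0)
    (hcTe1 : cT.mulVec (Pi.single 0 1 : Fin (d + 1) → ℝ) = (Pi.single 0 1 : Fin (d + 1) → ℝ))
    (hU : U = cU * cT)
    (r rhat : Fin (d + 1) → ℝ)
    (hrhat : rhat = (cT (Fin.last d) (Fin.last d))⁻¹ • (cT.mulVec r - h • cUᵀ.mulVec u))
    (Xe : Matrix (Fin (d + 1)) (Fin (d + 1)) ℂ) (Λ : Fin (d + 1) → ℂ)
    (hXe : IsUnit Xe.det)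
    (hdiag : (cUᵀ * A * cU).map Complex.ofReal
        + vecMulVec (fun i => (rhat i : ℂ)) (Pi.single (Fin.last d) 1 : Fin (d + 1) → ℂ)
      = Xe * diagonal Λ * Xe⁻¹)
    (p : Polynomial ℂ) :
    eunorm b • ((U.map Complex.ofReal).mulVec
        ((Polynomial.aeval (H.map Complex.ofReal +
            vecMulVec (fun i => (r i : ℂ)) (Pi.single (Fin.last d) 1 : Fin (d + 1) → ℂ)) p).mulVec
          (Pi.single 0 1 : Fin (d + 1) → ℂ)))
      - eunorm b • ((cU.map Complex.ofReal).mulVec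
        ((Polynomial.aeval ((cUᵀ * A * cU).map Complex.ofReal) p).mulVec
          (Pi.single 0 1 : Fin (d + 1) → ℂ)))
    = eunorm b • ((cU.map Complex.ofReal).mulVec
        ((∑ i, (Xe (Fin.last d) i * Xe⁻¹ i 0) •
            Polynomial.aeval ((cUᵀ * A * cU).map Complex.ofReal) (divDiffPoly p (Λ i))).mulVec
          (fun i => (rhat i : ℂ)))) := by
  have hupper : cT.IsUpperTriangular := fun i j => hcTupper i j
  have hτ : cT (Fin.last d) (Fin.last d) ≠ 0 := by
    rw [det_of_isUpperTriangular hupper] at hcTdet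
    exact Finset.prod_ne_zero_iff.mp hcTdet _ (Finset.mem_univ _)
  have hGT : (cUᵀ * A * cU + vecMulVec rhat (Pi.single (Fin.last d) 1)) * cT
      = cT * (H + vecMulVec r (Pi.single (Fin.last d) 1)) :=
    add_vecMulVec_mul_eq_mul_add_vecMulVec
      (transpose_mul_mul_mul_eq_of_mul_mul_eq hcU (hU ▸ hrel))
      (single_vecMul_of_isUpperTriangular hupper fun _ => Fin.le_last _)
      (by rw [hrhat, smul_inv_smul₀ hτ])
  have hGTc : ((cUᵀ * A * cU).map Complex.ofReal
      + vecMulVec (fun i => (rhat i : ℂ)) (Pi.single (Fin.last d) 1)) * cT.map Complex.ofReal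
      = cT.map Complex.ofReal
        * (H.map Complex.ofReal + vecMulVec (fun i => (r i : ℂ)) (Pi.single (Fin.last d) 1)) := by
    have := congrArg Complex.ofRealHom.mapMatrix hGT
    simp only [map_mul, map_add, RingHom.mapMatrix_apply, Matrix.map_vecMulVec,
      Complex.ofRealHom_eq_coe, Complex.ofReal_comp_single, Complex.ofReal_one] at this
    exact this
  have he1c : cT.map Complex.ofReal *ᵥ Pi.single 0 1 = Pi.single 0 1 := by
    ext i
    simpa [Pi.single_apply, apply_ite] using congrArg Complex.ofReal (congrFun hcTe1 i)
  have hUc : U.map Complex.ofReal = cU.map Complex.ofReal * cT.map Complex.ofReal :=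
    hU ▸ Matrix.map_mul (f := Complex.ofRealHom)
  rw [← smul_sub, hUc, mul_mulVec_aeval_mulVec hGTc he1c, ← mulVec_sub,
    aeval_add_vecMulVec_mulVec_sub_aeval_mulVec _ _ _ _ hXe hdiag]
  simp

/-- **Corollary 6.1 (polynomial version): sketched vs. full FOM.**
With `ℋ = cUᵀ A cU`, `A U = U H + h u e_dᵀ`, `U = cU cT` (`cT` upper triangular,
invertible, `cT e₁ = e₁`, `(d,d)` entry `τ̂`), `r̂ = (cT r - h cUᵀ u)/τ̂`, and a
diagonalization `ℋ + r̂ e_dᵀ = X Λ X⁻¹` over `ℂ` with `α_i = e_dᵀ X e_i`,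
`β_i = e_iᵀ X⁻¹ e₁`, the sketched FOM approximation `U p(H + r e_dᵀ) e₁ ‖b‖` and
the full FOM approximation `cU p(ℋ) e₁ ‖b‖` differ by
`cU (∑ i α_i β_i p[ℋ, λ_i]) r̂ ‖b‖`.  (The paper's `d` is `d+1` here.) -/
theorem sketched_minus_full_fom
    {n d : ℕ}
    (A : Matrix (Fin n) (Fin n) ℝ) (b : Fin n → ℝ) (hb : b ≠ 0)
    (cU : Matrix (Fin n) (Fin (d + 1)) ℝ) (hcU : cUᵀ * cU = 1)
    (U : Matrix (Fin n) (Fin (d + 1)) ℝ) (u : Fin n → ℝ)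
    (H : Matrix (Fin (d + 1)) (Fin (d + 1)) ℝ) (h : ℝ)
    (hrel : A * U = U * H + h • vecMulVec u (Pi.single (Fin.last d) 1 : Fin (d + 1) → ℝ))
    (cT : Matrix (Fin (d + 1)) (Fin (d + 1)) ℝ)
    (hcTupper : ∀ i j : Fin (d + 1), j < i → cT i j = 0)
    (hcTdet : cT.det ≠ 0)
    (hcTe1 : cT.mulVec (Pi.single 0 1 : Fin (d + 1) → ℝ) = (Pi.single 0 1 : Fin (d + 1) → ℝ))
    (hU : U = cU * cT)
    (r rhat : Fin (d + 1) → ℝ)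
    (hrhat : rhat = (cT (Fin.last d) (Fin.last d))⁻¹ • (cT.mulVec r - h • cUᵀ.mulVec u))
    (Xe : Matrix (Fin (d + 1)) (Fin (d + 1)) ℂ) (Λ : Fin (d + 1) → ℂ)
    (hXe : IsUnit Xe.det)
    (hdiag : (cUᵀ * A * cU).map Complex.ofReal
        + vecMulVec (fun i => (rhat i : ℂ)) (Pi.single (Fin.last d) 1 : Fin (d + 1) → ℂ)
      = Xe * diagonal Λ * Xe⁻¹)
    (p : Polynomial ℂ) :
    eunorm b • ((U.map Complex.ofReal).mulVec
        ((Polynomial.aeval (H.map Complex.ofReal +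
            vecMulVec (fun i => (r i : ℂ)) (Pi.single (Fin.last d) 1 : Fin (d + 1) → ℂ)) p).mulVec
          (Pi.single 0 1 : Fin (d + 1) → ℂ)))
      - eunorm b • ((cU.map Complex.ofReal).mulVec
        ((Polynomial.aeval ((cUᵀ * A * cU).map Complex.ofReal) p).mulVec
          (Pi.single 0 1 : Fin (d + 1) → ℂ)))
    = eunorm b • ((cU.map Complex.ofReal).mulVec
        ((∑ i, (Xe (Fin.last d) i * Xe⁻¹ i 0) •
            Polynomial.aeval ((cUᵀ * A * cU).map Complex.ofReal) (divDiffPoly p (Λ i))).mulVec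
          (fun i => (rhat i : ℂ)))) :=
  sketched_minus_full_fom_general A b cU hcU U u H h hrel cT hcTupper hcTdet hcTe1 hU r rhat hrhat
    Xe Λ hXe hdiag p
end

section
/- Let 0 ≤ ε < 1, U ∈ ℝ^{n×d}, u ∈ ℝⁿ, and let S ∈ ℝ^{s×n} be an ε-subspace embedding for the subspace spanned by the columns of U together with u. If x_S ∈ ℝ^d minimizes x ↦ ‖S(Ux − u)‖ over ℝ^d, then for every x ∈ ℝ^d, ‖U x_S − u‖ ≤ √((1+ε)/(1−ε)) · ‖U x − u‖; i.e., the sketched least-squares solution is quasi-optimal: ‖U x_S − u‖ ≤ √((1+ε)/(1−ε)) · min_{x ∈ ℝ^d} ‖U x − u‖. -/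
open Matrix

lemma eunorm_nonneg {m : ℕ} (v : Fin m → ℝ) : 0 ≤ eunorm v := Real.sqrt_nonneg _

lemma mem_span_aux {n d : ℕ} (U : Matrix (Fin n) (Fin d) ℝ) (u : Fin n → ℝ)
    (y : Fin d → ℝ) :
    U.mulVec y - u ∈ Submodule.span ℝ
      (Set.range (fun j : Fin d => fun i : Fin n => U i j) ∪ {u}) := by
  have hu : u ∈ Submodule.span ℝ
      (Set.range (fun j : Fin d => fun i : Fin n => U i j) ∪ {u}) :=
    Submodule.subset_span (Or.inr rfl)
  have hU : U.mulVec y = ∑ j, y j • (fun i : Fin n => U i j) := by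
    funext i
    simp [Matrix.mulVec, dotProduct, Finset.sum_apply, mul_comm]
  rw [hU]
  exact Submodule.sub_mem _ (Submodule.sum_mem _ (fun j _ =>
    Submodule.smul_mem _ _ (Submodule.subset_span (Or.inl ⟨j, rfl⟩)))) hu

/-- **Quasi-optimality of sketched least squares.**  If `S` is an `ε`-subspace
embedding for the span of the columns of `U` together with `u`, and `x_S`
minimizes `x ↦ ‖S(Ux - u)‖`, then
`‖U x_S - u‖ ≤ √((1+ε)/(1-ε)) ‖U x - u‖` for every `x`. -/
theorem sketched_least_squares_quasi_optimality
    {n s d : ℕ} {ε : ℝ} (hε0 : 0 ≤ ε) (hε1 : ε < 1)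
    (U : Matrix (Fin n) (Fin d) ℝ) (u : Fin n → ℝ)
    (S : Matrix (Fin s) (Fin n) ℝ)
    (hembed : ∀ v ∈ Submodule.span ℝ
        (Set.range (fun j : Fin d => fun i : Fin n => U i j) ∪ {u}),
      (1 - ε) * eunorm v ^ 2 ≤ eunorm (S.mulVec v) ^ 2 ∧
        eunorm (S.mulVec v) ^ 2 ≤ (1 + ε) * eunorm v ^ 2)
    (xS : Fin d → ℝ)
    (hxS : ∀ x : Fin d → ℝ,
      eunorm (S.mulVec (U.mulVec xS - u)) ≤ eunorm (S.mulVec (U.mulVec x - u))) :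
    ∀ x : Fin d → ℝ,
      eunorm (U.mulVec xS - u) ≤ Real.sqrt ((1 + ε) / (1 - ε)) * eunorm (U.mulVec x - u) := by
  intro x
  set a := eunorm (U.mulVec xS - u) with ha
  set b := eunorm (U.mulVec x - u) with hb
  have hane : 0 ≤ a := eunorm_nonneg _
  have hbne : 0 ≤ b := eunorm_nonneg _
  have h1 : (1 - ε) * a ^ 2 ≤ eunorm (S.mulVec (U.mulVec xS - u)) ^ 2 :=
    (hembed _ (mem_span_aux U u xS)).1
  have h2 : eunorm (S.mulVec (U.mulVec xS - u)) ^ 2 ≤ eunorm (S.mulVec (U.mulVec x - u)) ^ 2 :=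
    pow_le_pow_left₀ (eunorm_nonneg _) (hxS x) 2
  have h3 : eunorm (S.mulVec (U.mulVec x - u)) ^ 2 ≤ (1 + ε) * b ^ 2 :=
    (hembed _ (mem_span_aux U u x)).2
  have hpos : 0 < 1 - ε := by linarith
  have key : a ^ 2 ≤ (1 + ε) / (1 - ε) * b ^ 2 := by
    rw [div_mul_eq_mul_div, le_div_iff₀ hpos]
    nlinarith
  calc a = Real.sqrt (a ^ 2) := by rw [Real.sqrt_sq hane]
    _ ≤ Real.sqrt ((1 + ε) / (1 - ε) * b ^ 2) := Real.sqrt_le_sqrt key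
    _ = Real.sqrt ((1 + ε) / (1 - ε)) * b := by
        rw [Real.sqrt_mul (by positivity), Real.sqrt_sq hbne]
end

section
/- Let 0 ≤ ε < 1. Suppose: (i) U_{d+1} = [U_d, u_{d+1}] ∈ ℝ^{n×(d+1)} and U_{d+1} = 𝒰_{d+1} 𝒯_{d+1}, where 𝒰_{d+1} = [𝒰_d, 𝔲_{d+1}] has orthonormal columns and 𝒯_{d+1} = [[𝒯_d, 𝔱],[0, τ̂_{d+1}]] is upper triangular with 𝒯_d invertible and (d,d) entry τ̂_d; (ii) S ∈ ℝ^{s×n} is an ε-subspace embedding for the column span of U_{d+1}; (iii) S U_d = Q_d T_d with Q_d having orthonormal columns and T_d invertible; (iv) h_{d+1,d} ∈ ℝ. Define x_S := T_d^{-1} Q_d^T S u_{d+1} and r̂ := 𝒰_d^T (U_d x_S − u_{d+1}) · (h_{d+1,d}/τ̂_d). Then ‖r̂‖ ≤ |h_{d+1,d}| · |τ̂_{d+1}/τ̂_d| · √((1+ε)/(1−ε)). -/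
open Matrix

lemma dpAdj {p q : ℕ} (A : Matrix (Fin p) (Fin q) ℝ) (x : Fin q → ℝ) (y : Fin p → ℝ) :
    (A.mulVec x) ⬝ᵥ y = x ⬝ᵥ (Aᵀ.mulVec y) := by
  simp [Matrix.mulVec, dotProduct, Finset.sum_mul, Finset.mul_sum, Matrix.transpose]
  rw [Finset.sum_comm]
  apply Finset.sum_congr rfl; intros; apply Finset.sum_congr rfl; intros; ring

lemma dpIso {p q : ℕ} (A : Matrix (Fin p) (Fin q) ℝ) (hA : Aᵀ * A = 1)
    (x y : Fin q → ℝ) : (A.mulVec x) ⬝ᵥ (A.mulVec y) = x ⬝ᵥ y := by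
  rw [dpAdj, Matrix.mulVec_mulVec, hA, Matrix.one_mulVec]

lemma dpNonneg {q : ℕ} (v : Fin q → ℝ) : 0 ≤ v ⬝ᵥ v :=
  Finset.sum_nonneg fun i _ => mul_self_nonneg _

lemma dpProj {p q : ℕ} (A : Matrix (Fin p) (Fin q) ℝ) (hA : Aᵀ * A = 1)
    (w : Fin p → ℝ) : (Aᵀ.mulVec w) ⬝ᵥ (Aᵀ.mulVec w) ≤ w ⬝ᵥ w := by
  set qv := Aᵀ.mulVec w with hq
  have h1 : qv ⬝ᵥ qv = w ⬝ᵥ (A.mulVec qv) := by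
    rw [hq]
    rw [dpAdj Aᵀ w qv, Matrix.transpose_transpose]
  have h2 : (A.mulVec qv) ⬝ᵥ (A.mulVec qv) = qv ⬝ᵥ qv := dpIso A hA qv qv
  have hcs := Finset.sum_mul_sq_le_sq_mul_sq Finset.univ w (A.mulVec qv)
  have hw2 : ∑ i, w i ^ 2 = w ⬝ᵥ w := by simp [dotProduct, pow_two]
  have hp2 : ∑ i, (A.mulVec qv) i ^ 2 = qv ⬝ᵥ qv := by
    rw [← h2]; simp [dotProduct, pow_two]
  have hd : ∑ i, w i * (A.mulVec qv) i = qv ⬝ᵥ qv := by rw [h1]; rfl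
  rw [hw2, hp2, hd] at hcs
  rcases eq_or_lt_of_le (dpNonneg qv) with h0 | h0
  · rw [← h0]; exact dpNonneg w
  · nlinarith

lemma memSpanCols {n m : ℕ} (A : Matrix (Fin n) (Fin m) ℝ) (c : Fin m → ℝ) :
    A.mulVec c ∈ Submodule.span ℝ (Set.range (fun j : Fin m => fun i => A i j)) := by
  have : A.mulVec c = ∑ j, c j • (fun i => A i j) := by
    ext i
    simp [Matrix.mulVec, dotProduct, Finset.sum_apply, mul_comm]
  rw [this]
  exact Submodule.sum_mem _ fun j _ =>
    Submodule.smul_mem _ _ (Submodule.subset_span ⟨j, rfl⟩)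

lemma eunorm_sq {m : ℕ} (v : Fin m → ℝ) : eunorm v ^ 2 = v ⬝ᵥ v := by
  rw [eunorm, Real.sq_sqrt (Finset.sum_nonneg fun i _ => sq_nonneg _)]
  simp [dotProduct, pow_two]

/-- **Bound (29) on `r̂`.**  With the QR decomposition `U1 = [U, u] = cU1 cT1`
(`cU1 = [cU, cu]` orthonormal, `cT1 = [[cT, ct],[0, τ1]]` upper triangular, `cT`
invertible with `(d,d)` entry `τ̂_d`), `S` an `ε`-subspace embedding for the column
span of `U1`, a thin QR decomposition `S U = Q T` (`Q` orthonormal, `T`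
invertible), `x_S = T⁻¹ Qᵀ S u` and `r̂ = cUᵀ (U x_S - u) (h/τ̂_d)`, one has
`‖r̂‖ ≤ |h| |τ1/τ̂_d| √((1+ε)/(1-ε))`.  (The paper's `d` is `d+1` here.) -/
theorem rhat_norm_bound
    {n s d : ℕ} {ε : ℝ} (hε0 : 0 ≤ ε) (hε1 : ε < 1)
    (U : Matrix (Fin n) (Fin (d + 1)) ℝ) (u : Fin n → ℝ)
    (U1 : Matrix (Fin n) (Fin (d + 2)) ℝ)
    (hU1 : ∀ i, U1 i = Fin.snoc (U i) (u i))
    (cU : Matrix (Fin n) (Fin (d + 1)) ℝ) (cu : Fin n → ℝ)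
    (cU1 : Matrix (Fin n) (Fin (d + 2)) ℝ)
    (hcU1 : ∀ i, cU1 i = Fin.snoc (cU i) (cu i))
    (hcUorth : cU1ᵀ * cU1 = 1)
    (cT : Matrix (Fin (d + 1)) (Fin (d + 1)) ℝ) (ct : Fin (d + 1) → ℝ) (τ1 : ℝ)
    (cT1 : Matrix (Fin (d + 2)) (Fin (d + 2)) ℝ)
    (hcT1a : ∀ i j : Fin (d + 1), cT1 i.castSucc j.castSucc = cT i j)
    (hcT1b : ∀ i : Fin (d + 1), cT1 i.castSucc (Fin.last (d + 1)) = ct i)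
    (hcT1c : ∀ j : Fin (d + 1), cT1 (Fin.last (d + 1)) j.castSucc = 0)
    (hcT1d : cT1 (Fin.last (d + 1)) (Fin.last (d + 1)) = τ1)
    (hcT1upper : ∀ i j : Fin (d + 2), j < i → cT1 i j = 0)
    (hcTdet : cT.det ≠ 0)
    (hQRfull : U1 = cU1 * cT1)
    (S : Matrix (Fin s) (Fin n) ℝ)
    (hembed : ∀ v ∈ Submodule.span ℝ
        (Set.range (fun j : Fin (d + 2) => fun i : Fin n => U1 i j)),
      (1 - ε) * eunorm v ^ 2 ≤ eunorm (S.mulVec v) ^ 2 ∧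
        eunorm (S.mulVec v) ^ 2 ≤ (1 + ε) * eunorm v ^ 2)
    (Q : Matrix (Fin s) (Fin (d + 1)) ℝ) (T : Matrix (Fin (d + 1)) (Fin (d + 1)) ℝ)
    (hQorth : Qᵀ * Q = 1)
    (hTdet : T.det ≠ 0)
    (hQR : S * U = Q * T)
    (h : ℝ)
    (xS : Fin (d + 1) → ℝ)
    (hxS : xS = T⁻¹.mulVec (Qᵀ.mulVec (S.mulVec u)))
    (rhat : Fin (d + 1) → ℝ)
    (hrhat : rhat = (h / cT (Fin.last d) (Fin.last d)) • cUᵀ.mulVec (U.mulVec xS - u)) :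
    eunorm rhat ≤
      |h| * |τ1 / cT (Fin.last d) (Fin.last d)| * Real.sqrt ((1 + ε) / (1 - ε)) := by
  -- abbreviations
  have hτdef : cT (Fin.last d) (Fin.last d) = cT (Fin.last d) (Fin.last d) := rfl
  set τd := cT (Fin.last d) (Fin.last d) with hτd
  -- orthonormality of cU and cu
  have hcUo : cUᵀ * cU = 1 := by
    ext i j
    have h0 := congrFun (congrFun hcUorth i.castSucc) j.castSucc
    simpa [Matrix.mul_apply, Matrix.one_apply, hcU1, Fin.snoc_castSucc,
      Fin.castSucc_inj, Matrix.transpose_apply] using h0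
  have hcucu : cu ⬝ᵥ cu = 1 := by
    have h0 := congrFun (congrFun hcUorth (Fin.last (d+1))) (Fin.last (d+1))
    simpa [Matrix.mul_apply, Matrix.one_apply, hcU1, Fin.snoc_last,
      dotProduct, Matrix.transpose_apply] using h0
  -- block structure: U = cU * cT and u = cU ct + τ1 cu
  have hUeq : U = cU * cT := by
    ext i j
    have h0 := congrFun (congrFun hQRfull i) j.castSucc
    rw [hU1 i, Fin.snoc_castSucc] at h0
    rw [h0, Matrix.mul_apply, Matrix.mul_apply, Fin.sum_univ_castSucc]
    simp [hcU1, Fin.snoc_castSucc, Fin.snoc_last, hcT1a, hcT1c]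
  have hu : u = cU.mulVec ct + τ1 • cu := by
    ext i
    have h0 := congrFun (congrFun hQRfull i) (Fin.last (d+1))
    rw [hU1 i, Fin.snoc_last] at h0
    rw [h0, Matrix.mul_apply, Fin.sum_univ_castSucc]
    simp [hcU1, Fin.snoc_castSucc, Fin.snoc_last, hcT1b, hcT1d,
      Matrix.mulVec, dotProduct, mul_comm]
  -- residuals have snoc form
  have hform : ∀ x : Fin (d+1) → ℝ, U.mulVec x - u = U1.mulVec (Fin.snoc x (-1)) := by
    intro x; ext i
    simp only [Pi.sub_apply, Matrix.mulVec, dotProduct, hU1]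
    rw [Fin.sum_univ_castSucc (n := d + 1)]
    simp [Fin.snoc_castSucc, Fin.snoc_last]
    ring
  set r := U.mulVec xS - u with hr
  set b := S.mulVec u with hb
  set cv := Qᵀ.mulVec b with hcv
  have hTunit : IsUnit T.det := isUnit_iff_ne_zero.mpr hTdet
  have hcTunit : IsUnit cT.det := isUnit_iff_ne_zero.mpr hcTdet
  have hTxS : T.mulVec xS = cv := by
    rw [hxS, Matrix.mulVec_mulVec, Matrix.mul_nonsing_inv T hTunit, Matrix.one_mulVec]
  have hSr : S.mulVec r = Q.mulVec cv - b := by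
    have h1 : S.mulVec (U.mulVec xS) = Q.mulVec cv := by
      rw [Matrix.mulVec_mulVec, hQR, ← Matrix.mulVec_mulVec, hTxS]
    rw [hr, Matrix.mulVec_sub, h1]
  -- comparison point
  set xstar := cT⁻¹.mulVec ct with hxstar
  have hw : U.mulVec xstar - u = (-τ1) • cu := by
    rw [hUeq, hu, hxstar, ← Matrix.mulVec_mulVec, Matrix.mulVec_mulVec ct cT cT⁻¹,
      Matrix.mul_nonsing_inv cT hcTunit, Matrix.one_mulVec]
    ext i; simp
  -- minimality of xS for the sketched residual
  have hmin : (S.mulVec r) ⬝ᵥ (S.mulVec r)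
      ≤ (S.mulVec (U.mulVec xstar - u)) ⬝ᵥ (S.mulVec (U.mulVec xstar - u)) := by
    have hSx : S.mulVec (U.mulVec xstar - u) = Q.mulVec (T.mulVec xstar) - b := by
      rw [Matrix.mulVec_sub, Matrix.mulVec_mulVec, hQR, ← Matrix.mulVec_mulVec]
    rw [hSr, hSx]
    set y := T.mulVec xstar with hy
    have e1 : ∀ z : Fin (d+1) → ℝ, (Q.mulVec z - b) ⬝ᵥ (Q.mulVec z - b)
        = z ⬝ᵥ z - 2 * (z ⬝ᵥ cv) + b ⬝ᵥ b := by
      intro z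
      rw [sub_dotProduct, dotProduct_sub, dotProduct_sub,
        dpIso Q hQorth, dpAdj Q z b, dotProduct_comm b (Q.mulVec z), dpAdj Q z b]
      rw [hcv]; ring
    rw [e1 cv, e1 y]
    have e2 : (y - cv) ⬝ᵥ (y - cv) = y ⬝ᵥ y - 2*(y ⬝ᵥ cv) + cv ⬝ᵥ cv := by
      rw [sub_dotProduct, dotProduct_sub, dotProduct_sub,
        dotProduct_comm cv y]
      ring
    nlinarith [dpNonneg (y - cv)]
  -- embedding bounds
  have hrmem : r ∈ Submodule.span ℝ
      (Set.range (fun j : Fin (d + 2) => fun i : Fin n => U1 i j)) := by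
    rw [hr, hform xS]; exact memSpanCols U1 _
  have hwmem : (U.mulVec xstar - u) ∈ Submodule.span ℝ
      (Set.range (fun j : Fin (d + 2) => fun i : Fin n => U1 i j)) := by
    rw [hform xstar]; exact memSpanCols U1 _
  obtain ⟨hlo, -⟩ := hembed r hrmem
  obtain ⟨-, hhi⟩ := hembed _ hwmem
  rw [eunorm_sq, eunorm_sq] at hlo hhi
  have hwdp : (U.mulVec xstar - u) ⬝ᵥ (U.mulVec xstar - u) = τ1 ^ 2 := by
    rw [hw, smul_dotProduct, dotProduct_smul, hcucu]
    simp; ring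
  have h1e : (0:ℝ) < 1 - ε := by linarith
  have hrr : r ⬝ᵥ r ≤ (1+ε)/(1-ε) * τ1^2 := by
    rw [hwdp] at hhi
    have hchain := le_trans hmin hhi
    rw [div_mul_eq_mul_div, le_div_iff₀ h1e]
    nlinarith [le_trans hlo hchain]
  have hproj := dpProj cU hcUo r
  -- final computation
  rw [hrhat]
  have hsc : eunorm ((h/τd) • cUᵀ.mulVec r) = |h/τd| * eunorm (cUᵀ.mulVec r) := by
    rw [eunorm, eunorm, ← Real.sqrt_sq_eq_abs, ← Real.sqrt_mul (sq_nonneg _)]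
    congr 1
    rw [Finset.mul_sum]
    apply Finset.sum_congr rfl; intro i _
    simp [Pi.smul_apply, smul_eq_mul]; ring
  rw [hsc]
  have hnorm : eunorm (cUᵀ.mulVec r) ≤ |τ1| * Real.sqrt ((1+ε)/(1-ε)) := by
    have hle : (cUᵀ.mulVec r) ⬝ᵥ (cUᵀ.mulVec r) ≤ (1+ε)/(1-ε) * τ1^2 :=
      le_trans hproj hrr
    have he : eunorm (cUᵀ.mulVec r) = Real.sqrt ((cUᵀ.mulVec r) ⬝ᵥ (cUᵀ.mulVec r)) := by
      rw [eunorm]; congr 1; simp [dotProduct, pow_two]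
    rw [he]
    calc Real.sqrt ((cUᵀ.mulVec r) ⬝ᵥ (cUᵀ.mulVec r))
        ≤ Real.sqrt ((1+ε)/(1-ε) * τ1^2) := Real.sqrt_le_sqrt hle
      _ = |τ1| * Real.sqrt ((1+ε)/(1-ε)) := by
          rw [mul_comm, Real.sqrt_mul (sq_nonneg _), Real.sqrt_sq_eq_abs]
  calc |h/τd| * eunorm (cUᵀ.mulVec r)
      ≤ |h/τd| * (|τ1| * Real.sqrt ((1+ε)/(1-ε))) :=
        mul_le_mul_of_nonneg_left hnorm (abs_nonneg _)
    _ = |h| * |τ1/τd| * Real.sqrt ((1+ε)/(1-ε)) := by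
        rw [abs_div, abs_div]; ring
end
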